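/- arXiv:2103.04072 — 2 statements merged into one kernel-verified Lean document; each statement's English description precedes it below -/
import Mathlib

section
/- The function f₆(r) = (r/√(1-r²) - √(1-r²)·artanh(r)) / (artanh(r) - r) is strictly increasing on (0,1), with limit 2 as r→0⁺ and tending to ∞ as r→1⁻. -/
open Real Set Filter Topology

noncomputable def artanh (r : ℝ) : ℝ := (1/2) * Real.log ((1+r)/(1-r))

noncomputable def ellipticK (r : ℝ) : ℝ :=
  ∫ t in (0:ℝ)..(π/2), (1 - r^2 * Real.sin t ^ 2) ^ (-(1/2) : ℝ)

noncomputable def ellipticE (r : ℝ) : ℝ :=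
  ∫ t in (0:ℝ)..(π/2), (1 - r^2 * Real.sin t ^ 2) ^ ((1/2) : ℝ)

/-!
Write `f₆ = N / D` with `N(0) = D(0) = 0` and `N' = D' · q`, where
`q r = 1 / √(1 - r²) + √(1 - r²) · artanh r / r`. The derivative of `q` has the sign of
`r³ / (1 - r²) - (artanh r - r)`, which is positive since it vanishes at `0` and has derivative
`2r² / (1 - r²)²`. So `q` increases, and the monotone form of l'Hôpital's rule transfers this to
`N / D`; the ordinary rule gives `f₆(0⁺) = q(0⁺) = 2`. Near `1`, `f₆ ≥ N / artanh r =
r / (√(1 - r²) artanh r) - √(1 - r²)`, and `√(1 - r²) artanh r = u log (1 + r) - u log u` with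
`u = √(1 - r²) → 0`.
-/

section MonotoneLHopital

variable {f g g' q : ℝ → ℝ}

theorem exists_sub_eq_mul_of_hasDerivAt_mul {x y : ℝ} (hxy : x < y)
    (hf : ContinuousOn f (Icc x y)) (hg : ContinuousOn g (Icc x y))
    (hf' : ∀ t ∈ Ioo x y, HasDerivAt f (g' t * q t) t) (hg' : ∀ t ∈ Ioo x y, HasDerivAt g (g' t) t)
    (hg'0 : ∀ t ∈ Ioo x y, g' t ≠ 0) :
    ∃ c ∈ Ioo x y, f y - f x = (g y - g x) * q c := by
  obtain ⟨c, hc, h⟩ :=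
    exists_ratio_hasDerivAt_eq_ratio_slope f (fun t => g' t * q t) hxy hf hf' g g' hg hg'
  exact ⟨c, hc, mul_right_cancel₀ (hg'0 c hc) (by linear_combination -h)⟩

theorem strictMonoOn_div_of_hasDerivAt_mul {a b : ℝ}
    (hf : ContinuousOn f (Ico a b)) (hg : ContinuousOn g (Ico a b)) (hfa : f a = 0) (hga : g a = 0)
    (hf' : ∀ x ∈ Ioo a b, HasDerivAt f (g' x * q x) x) (hg' : ∀ x ∈ Ioo a b, HasDerivAt g (g' x) x)
    (hg'pos : ∀ x ∈ Ioo a b, 0 < g' x) (hq : StrictMonoOn q (Ioo a b)) :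
    StrictMonoOn (fun x => f x / g x) (Ioo a b) := by
  have hg_mono : StrictMonoOn g (Ico a b) :=
    strictMonoOn_of_hasDerivWithinAt_pos (convex_Ico a b) hg
      (by simpa only [interior_Ico] using fun x hx => (hg' x hx).hasDerivWithinAt)
      (by simpa only [interior_Ico] using hg'pos)
  intro x hx y hy hxy
  have hIcc : ∀ {u v}, a ≤ u → v < b → Icc u v ⊆ Ico a b := fun hu hv t ht =>
    ⟨hu.trans ht.1, ht.2.trans_lt hv⟩
  have hIoo : ∀ {u v}, a ≤ u → v ≤ b → Ioo u v ⊆ Ioo a b := fun hu hv t ht =>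
    ⟨hu.trans_lt ht.1, ht.2.trans_le hv⟩
  obtain ⟨c, hc, hfx⟩ := exists_sub_eq_mul_of_hasDerivAt_mul hx.1
    (hf.mono (hIcc le_rfl hx.2)) (hg.mono (hIcc le_rfl hx.2))
    (fun t ht => hf' t (hIoo le_rfl hx.2.le ht)) (fun t ht => hg' t (hIoo le_rfl hx.2.le ht))
    (fun t ht => (hg'pos t (hIoo le_rfl hx.2.le ht)).ne')
  obtain ⟨d, hd, hfy⟩ := exists_sub_eq_mul_of_hasDerivAt_mul hxy
    (hf.mono (hIcc hx.1.le hy.2)) (hg.mono (hIcc hx.1.le hy.2))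
    (fun t ht => hf' t (hIoo hx.1.le hy.2.le ht)) (fun t ht => hg' t (hIoo hx.1.le hy.2.le ht))
    (fun t ht => (hg'pos t (hIoo hx.1.le hy.2.le ht)).ne')
  have hgx : 0 < g x :=
    hga ▸ hg_mono (left_mem_Ico.2 (hx.1.trans hx.2)) (Ioo_subset_Ico_self hx) hx.1
  have hgxy : g x < g y := hg_mono (Ioo_subset_Ico_self hx) (Ioo_subset_Ico_self hy) hxy
  have hqcd : q c < q d := hq (hIoo le_rfl hx.2.le hc) (hIoo hx.1.le hy.2.le hd) (hc.2.trans hd.1)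
  rw [hfa, hga, sub_zero, sub_zero] at hfx
  rw [div_lt_div_iff₀ hgx (hgx.trans hgxy), eq_add_of_sub_eq hfy, hfx]
  linear_combination mul_lt_mul_of_pos_left hqcd (mul_pos hgx (sub_pos.2 hgxy))

end MonotoneLHopital

theorem one_sub_sq_pos {r : ℝ} (hr : r ∈ Ioo (-1 : ℝ) 1) : 0 < 1 - r ^ 2 := by
  nlinarith [hr.1, hr.2]

theorem sq_div_one_sub_sq_pos {r : ℝ} (hr : r ∈ Ioo (0 : ℝ) 1) : 0 < r ^ 2 / (1 - r ^ 2) :=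
  div_pos (pow_pos hr.1 2) (one_sub_sq_pos ⟨by linarith [hr.1], hr.2⟩)

theorem hasDerivAt_artanh {r : ℝ} (hr : r ∈ Ioo (-1 : ℝ) 1) :
    HasDerivAt _root_.artanh (1 / (1 - r ^ 2)) r := by
  have hp : 0 < 1 + r := by linarith [hr.1]
  have hm : 0 < 1 - r := by linarith [hr.2]
  have hquot : HasDerivAt (fun x : ℝ => (1 + x) / (1 - x))
      ((1 * (1 - r) - (1 + r) * -1) / (1 - r) ^ 2) r :=
    ((hasDerivAt_id r).const_add 1).div ((hasDerivAt_id r).neg.const_add 1) hm.ne'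
  refine ((hquot.log (div_pos hp hm).ne').const_mul (1 / 2 : ℝ)).congr_deriv ?_
  have := (one_sub_sq_pos hr).ne'
  field_simp
  ring

theorem continuousOn_artanh : ContinuousOn _root_.artanh (Ioo (-1 : ℝ) 1) :=
  fun _ hr => (hasDerivAt_artanh hr).continuousAt.continuousWithinAt

theorem hasDerivAt_sqrt_one_sub_sq {r : ℝ} (hr : r ∈ Ioo (-1 : ℝ) 1) :
    HasDerivAt (fun x => √(1 - x ^ 2)) (-r / √(1 - r ^ 2)) r := by
  have hinner : HasDerivAt (fun x : ℝ => 1 - x ^ 2) (-(2 * r)) r := by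
    simpa using (hasDerivAt_pow 2 r).const_sub 1
  refine ((hasDerivAt_sqrt (one_sub_sq_pos hr).ne').comp r hinner).congr_deriv ?_
  have : √(1 - r ^ 2) ≠ 0 := (sqrt_pos.2 (one_sub_sq_pos hr)).ne'
  field_simp

theorem artanh_sub_self_lt {r : ℝ} (hr : r ∈ Ioo (0 : ℝ) 1) :
    _root_.artanh r - r < r ^ 3 / (1 - r ^ 2) := by
  set H : ℝ → ℝ := fun x => x ^ 3 / (1 - x ^ 2) + x - _root_.artanh x
  have hH : ∀ x ∈ Ioo (-1 : ℝ) 1, HasDerivAt H (2 * x ^ 2 / (1 - x ^ 2) ^ 2) x := by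
    intro x hx
    have hinner : HasDerivAt (fun y : ℝ => 1 - y ^ 2) (-(2 * x)) x := by
      simpa using (hasDerivAt_pow 2 x).const_sub 1
    refine ((((hasDerivAt_pow 3 x).div hinner (one_sub_sq_pos hx).ne').add (hasDerivAt_id x)).sub
      (hasDerivAt_artanh hx)).congr_deriv ?_
    have := (one_sub_sq_pos hx).ne'
    field_simp
    ring
  have hsub : Ico (0 : ℝ) 1 ⊆ Ioo (-1) 1 := Ico_subset_Ioo_left (by norm_num)
  have hH_mono : StrictMonoOn H (Ico 0 1) := by
    refine strictMonoOn_of_hasDerivWithinAt_pos (convex_Ico 0 1)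
      (f' := fun x => 2 * x ^ 2 / (1 - x ^ 2) ^ 2)
      (fun x hx => (hH x (hsub hx)).continuousAt.continuousWithinAt) ?_ ?_ <;> rw [interior_Ico]
    · exact fun x hx => (hH x (hsub (Ioo_subset_Ico_self hx))).hasDerivWithinAt
    · exact fun x hx => div_pos (by nlinarith [hx.1])
        (pow_pos (one_sub_sq_pos (hsub (Ioo_subset_Ico_self hx))) 2)
  have hH0 : H 0 = 0 := by simp [H, _root_.artanh]
  have := hH_mono (left_mem_Ico.2 one_pos) (Ioo_subset_Ico_self hr) hr.1
  simp only [hH0, H] at this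
  linarith

theorem artanh_pos_of_mem_Ioo {r : ℝ} (hr : r ∈ Ioo (0 : ℝ) 1) : 0 < _root_.artanh r :=
  mul_pos one_half_pos (log_pos ((one_lt_div (by linarith [hr.2])).2 (by linarith [hr.1])))

theorem sqrt_one_sub_sq_mul_artanh {r : ℝ} (hr : r ∈ Ioo (-1 : ℝ) 1) :
    √(1 - r ^ 2) * _root_.artanh r =
      √(1 - r ^ 2) * log (1 + r) - √(1 - r ^ 2) * log √(1 - r ^ 2) := by
  have hp : 0 < 1 + r := by linarith [hr.1]
  have hm : 0 < 1 - r := by linarith [hr.2]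
  rw [_root_.artanh, log_sqrt (one_sub_sq_pos hr).le, log_div hp.ne' hm.ne',
    show 1 - r ^ 2 = (1 + r) * (1 - r) by ring, log_mul hp.ne' hm.ne']
  ring

theorem tendsto_sqrt_one_sub_sq_mul_artanh :
    Tendsto (fun r => √(1 - r ^ 2) * _root_.artanh r) (𝓝[<] 1) (𝓝[>] 0) := by
  have hcont : ContinuousAt
      (fun r : ℝ => √(1 - r ^ 2) * log (1 + r) - √(1 - r ^ 2) * log √(1 - r ^ 2)) 1 :=
    (by fun_prop (disch := norm_num) : ContinuousAt (fun r : ℝ => √(1 - r ^ 2) * log (1 + r)) 1).sub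
      (continuous_mul_log.comp (by fun_prop : Continuous fun r : ℝ => √(1 - r ^ 2))).continuousAt
  have hmem : Ioo (0 : ℝ) 1 ∈ 𝓝[<] 1 := Ioo_mem_nhdsLT one_pos
  refine tendsto_nhdsWithin_iff.2 ⟨?_, ?_⟩
  · have h := hcont.tendsto
    norm_num at h
    refine (h.mono_left nhdsWithin_le_nhds).congr' ?_
    filter_upwards [hmem] with r hr
    exact (sqrt_one_sub_sq_mul_artanh ⟨by linarith [hr.1], hr.2⟩).symm
  · filter_upwards [hmem] with r hr
    have hr' : r ∈ Ioo (-1 : ℝ) 1 := ⟨by linarith [hr.1], hr.2⟩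
    exact mul_pos (sqrt_pos.2 (one_sub_sq_pos hr')) (artanh_pos_of_mem_Ioo hr)

namespace F6

noncomputable def num (r : ℝ) : ℝ := r / √(1 - r ^ 2) - √(1 - r ^ 2) * _root_.artanh r

noncomputable def den (r : ℝ) : ℝ := _root_.artanh r - r

noncomputable def derivRatio (r : ℝ) : ℝ := 1 / √(1 - r ^ 2) + √(1 - r ^ 2) * _root_.artanh r / r

theorem num_zero : num 0 = 0 := by simp [num, _root_.artanh]

theorem den_zero : den 0 = 0 := by simp [den, _root_.artanh]

theorem continuousOn_num : ContinuousOn num (Ioo (-1) 1) := by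
  have hs : ContinuousOn (fun x : ℝ => √(1 - x ^ 2)) (Ioo (-1) 1) := by fun_prop
  exact (continuousOn_id.div hs fun x hx => (sqrt_pos.2 (one_sub_sq_pos hx)).ne').sub
    (hs.mul continuousOn_artanh)

theorem hasDerivAt_den {r : ℝ} (hr : r ∈ Ioo (-1 : ℝ) 1) :
    HasDerivAt den (r ^ 2 / (1 - r ^ 2)) r := by
  refine ((hasDerivAt_artanh hr).sub (hasDerivAt_id r)).congr_deriv ?_
  have := (one_sub_sq_pos hr).ne'
  field_simp
  ring

theorem continuousOn_den : ContinuousOn den (Ioo (-1) 1) :=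
  fun _ hr => (hasDerivAt_den hr).continuousAt.continuousWithinAt

theorem den_pos {r : ℝ} (hr : r ∈ Ioo (0 : ℝ) 1) : 0 < den r := by
  have hsub : Ico (0 : ℝ) 1 ⊆ Ioo (-1) 1 := Ico_subset_Ioo_left (by norm_num)
  have hmono : StrictMonoOn den (Ico 0 1) :=
    strictMonoOn_of_hasDerivWithinAt_pos (convex_Ico 0 1) (continuousOn_den.mono hsub)
      (by simpa only [interior_Ico] using fun x hx =>
        (hasDerivAt_den (hsub (Ioo_subset_Ico_self hx))).hasDerivWithinAt)
      (by simpa only [interior_Ico] using fun x hx => sq_div_one_sub_sq_pos hx)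
  simpa [den_zero] using hmono (left_mem_Ico.2 one_pos) (Ioo_subset_Ico_self hr) hr.1

theorem hasDerivAt_num {r : ℝ} (hr : r ∈ Ioo (0 : ℝ) 1) :
    HasDerivAt num (r ^ 2 / (1 - r ^ 2) * derivRatio r) r := by
  have hr' : r ∈ Ioo (-1 : ℝ) 1 := ⟨by linarith [hr.1], hr.2⟩
  have hs := hasDerivAt_sqrt_one_sub_sq hr'
  have hs0 : √(1 - r ^ 2) ≠ 0 := (sqrt_pos.2 (one_sub_sq_pos hr')).ne'
  refine (((hasDerivAt_id r).div hs hs0).sub (hs.mul (hasDerivAt_artanh hr'))).congr_deriv ?_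
  have hs2 : √(1 - r ^ 2) ^ 2 = 1 - r ^ 2 := sq_sqrt (one_sub_sq_pos hr').le
  simp only [derivRatio, id]
  set s := √(1 - r ^ 2)
  have hr0 : r ≠ 0 := hr.1.ne'
  rw [← hs2]
  field_simp
  ring

theorem hasDerivAt_derivRatio {r : ℝ} (hr : r ∈ Ioo (0 : ℝ) 1) :
    HasDerivAt derivRatio ((r ^ 3 / (1 - r ^ 2) - den r) / (√(1 - r ^ 2) * r ^ 2)) r := by
  have hr' : r ∈ Ioo (-1 : ℝ) 1 := ⟨by linarith [hr.1], hr.2⟩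
  have hs := hasDerivAt_sqrt_one_sub_sq hr'
  have hs0 : √(1 - r ^ 2) ≠ 0 := (sqrt_pos.2 (one_sub_sq_pos hr')).ne'
  refine (((hasDerivAt_const r (1 : ℝ)).div hs hs0).add
    ((hs.mul (hasDerivAt_artanh hr')).div (hasDerivAt_id r) hr.1.ne')).congr_deriv ?_
  have hs2 : √(1 - r ^ 2) ^ 2 = 1 - r ^ 2 := sq_sqrt (one_sub_sq_pos hr').le
  simp only [den, id, Pi.mul_apply]
  set s := √(1 - r ^ 2)
  have hr0 : r ≠ 0 := hr.1.ne'
  rw [← hs2]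
  field_simp
  linear_combination (-(_root_.artanh r * s ^ 2)) * hs2

theorem strictMonoOn_derivRatio : StrictMonoOn derivRatio (Ioo 0 1) := by
  refine strictMonoOn_of_hasDerivWithinAt_pos (convex_Ioo 0 1)
    (f' := fun x => (x ^ 3 / (1 - x ^ 2) - den x) / (√(1 - x ^ 2) * x ^ 2))
    (fun x hx => (hasDerivAt_derivRatio hx).continuousAt.continuousWithinAt) ?_ ?_ <;>
    rw [interior_Ioo]
  · exact fun x hx => (hasDerivAt_derivRatio hx).hasDerivWithinAt
  · intro x hx
    have hx' : x ∈ Ioo (-1 : ℝ) 1 := ⟨by linarith [hx.1], hx.2⟩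
    exact div_pos (sub_pos.2 (artanh_sub_self_lt hx))
      (mul_pos (sqrt_pos.2 (one_sub_sq_pos hx')) (pow_pos hx.1 2))

theorem tendsto_derivRatio_zero : Tendsto derivRatio (𝓝[>] 0) (𝓝 2) := by
  have hs : Tendsto (fun r : ℝ => √(1 - r ^ 2)) (𝓝[>] 0) (𝓝 1) := by
    simpa using ((by fun_prop : Continuous fun r : ℝ => √(1 - r ^ 2)).tendsto 0).mono_left
      nhdsWithin_le_nhds
  have hslope : Tendsto (fun r => _root_.artanh r / r) (𝓝[>] 0) (𝓝 1) := by
    have h := hasDerivAt_iff_tendsto_slope.1 (hasDerivAt_artanh (r := 0) (by norm_num))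
    refine ((h.mono_left (nhdsWithin_mono 0 fun x hx => ne_of_gt hx)).congr' ?_).trans ?_
    · filter_upwards with x
      simp [slope_def_field, _root_.artanh]
    · norm_num
  have := (tendsto_const_nhds (x := (1 : ℝ)).div hs one_ne_zero).add (hs.mul hslope)
  norm_num at this
  exact this.congr fun r => by simp only [derivRatio, one_div, mul_div_assoc]

theorem strictMonoOn_num_div_den : StrictMonoOn (fun r => num r / den r) (Ioo 0 1) :=
  have hsub : Ico (0 : ℝ) 1 ⊆ Ioo (-1) 1 := Ico_subset_Ioo_left (by norm_num)
  strictMonoOn_div_of_hasDerivAt_mul (continuousOn_num.mono hsub) (continuousOn_den.mono hsub)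
    num_zero den_zero (fun _ hr => hasDerivAt_num hr)
    (fun _ hr => hasDerivAt_den (Ioo_subset_Ioo_left (by norm_num) hr))
    (fun _ hr => sq_div_one_sub_sq_pos hr) strictMonoOn_derivRatio

theorem tendsto_num_div_den_zero : Tendsto (fun r => num r / den r) (𝓝[>] 0) (𝓝 2) := by
  have hcont : ∀ {F : ℝ → ℝ}, ContinuousOn F (Ioo (-1) 1) → F 0 = 0 → Tendsto F (𝓝[>] 0) (𝓝 0) :=
    fun hF hF0 => by
      simpa [hF0] using (hF.continuousAt (Ioo_mem_nhds (by norm_num) one_pos)).tendsto.mono_left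
        nhdsWithin_le_nhds
  refine HasDerivAt.lhopital_zero_right_on_Ioo one_pos (fun _ hr => hasDerivAt_num hr)
    (fun _ hr => hasDerivAt_den (Ioo_subset_Ioo_left (by norm_num) hr))
    (fun _ hr => (sq_div_one_sub_sq_pos hr).ne') (hcont continuousOn_num num_zero)
    (hcont continuousOn_den den_zero) (tendsto_derivRatio_zero.congr' ?_)
  filter_upwards [Ioo_mem_nhdsGT one_pos] with r hr
  rw [mul_div_cancel_left₀ _ (sq_div_one_sub_sq_pos hr).ne']

theorem two_le_num_div_den {r : ℝ} (hr : r ∈ Ioo (0 : ℝ) 1) : 2 ≤ num r / den r := by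
  refine le_of_tendsto tendsto_num_div_den_zero ?_
  filter_upwards [Ioo_mem_nhdsGT hr.1] with x hx
  exact (strictMonoOn_num_div_den ⟨hx.1, hx.2.trans hr.2⟩ hr hx.2).le

theorem tendsto_num_div_den_one : Tendsto (fun r => num r / den r) (𝓝[<] 1) atTop := by
  have hs : Tendsto (fun r : ℝ => √(1 - r ^ 2)) (𝓝[<] 1) (𝓝 0) := by
    simpa using ((by fun_prop : Continuous fun r : ℝ => √(1 - r ^ 2)).tendsto 1).mono_left
      nhdsWithin_le_nhds
  have hlower : Tendsto (fun r => r * (√(1 - r ^ 2) * _root_.artanh r)⁻¹ + -√(1 - r ^ 2))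
      (𝓝[<] 1) atTop :=
    ((tendsto_id.mono_left nhdsWithin_le_nhds).pos_mul_atTop one_pos
      (tendsto_inv_nhdsGT_zero.comp tendsto_sqrt_one_sub_sq_mul_artanh)).atTop_add
      (neg_zero (G := ℝ) ▸ hs.neg)
  refine tendsto_atTop_mono' _ ?_ hlower
  filter_upwards [Ioo_mem_nhdsLT one_pos] with r hr
  have hr' : r ∈ Ioo (-1 : ℝ) 1 := ⟨by linarith [hr.1], hr.2⟩
  have hs0 : √(1 - r ^ 2) ≠ 0 := (sqrt_pos.2 (one_sub_sq_pos hr')).ne'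
  have hden := den_pos hr
  have hnum : 0 ≤ num r := by
    have := two_le_num_div_den hr
    rw [le_div_iff₀ hden] at this
    linarith
  calc r * (√(1 - r ^ 2) * _root_.artanh r)⁻¹ + -√(1 - r ^ 2) = num r / _root_.artanh r := by
        rw [num]
        field_simp [(artanh_pos_of_mem_Ioo hr).ne']
        ring
    _ ≤ num r / den r := div_le_div_of_nonneg_left hnum hden (by rw [den]; linarith [hr.1])

end F6

theorem stmt4 :
    StrictMonoOn (fun r : ℝ =>
      (r / Real.sqrt (1 - r^2) - Real.sqrt (1 - r^2) * _root_.artanh r) / (_root_.artanh r - r)) (Ioo 0 1) ∧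
    Tendsto (fun r : ℝ =>
      (r / Real.sqrt (1 - r^2) - Real.sqrt (1 - r^2) * _root_.artanh r) / (_root_.artanh r - r)) (𝓝[>] 0) (𝓝 2) ∧
    Tendsto (fun r : ℝ =>
      (r / Real.sqrt (1 - r^2) - Real.sqrt (1 - r^2) * _root_.artanh r) / (_root_.artanh r - r)) (𝓝[<] 1) atTop :=
  ⟨F6.strictMonoOn_num_div_den, F6.tendsto_num_div_den_zero, F6.tendsto_num_div_den_one⟩
end

section
/- The function f₇(r) = log(artanh(r)/r)/r² is strictly increasing on (0,1), with limit 1/3 as r→0⁺ and tending to ∞ as r→1⁻. -/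
open Real Set Filter Topology

/-!
Write `A = artanh r`. Then `f₇' = f₇DerivNum / r³` with
`f₇DerivNum r = r / ((1 - r²) A) - 1 - 2 log (A / r)`, and
`f₇DerivNum' = (2 (1 - r²)² A² + r (3r² - 1) A - r²) / (r ((1 - r²) A)²)`.
Bounding `A` below by a partial sum of `Σ r^(2k+1)/(2k+1)` makes this numerator positive, so
`f₇DerivNum` increases from its limit `0` at `0⁺` and `f₇` is strictly increasing.
The same series gives `1 + r²/3 ≤ A / r ≤ 1 + r²/(3(1 - r²))`, hence, via `1 - 1/u ≤ log u ≤ u - 1`,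
`1/(3 + r²) ≤ f₇ r ≤ 1/(3(1 - r²))`. Near `1`, `f₇ r ≥ log A → ∞`.
-/

theorem hasSum_artanh {x : ℝ} (hx : |x| < 1) :
    HasSum (fun k : ℕ => x ^ (2 * k + 1) / (2 * k + 1)) (_root_.artanh x) := by
  obtain ⟨hx₁, hx₂⟩ := abs_lt.mp hx
  have h := (hasSum_log_sub_log_of_abs_lt_one hx).mul_left (1 / 2)
  rw [← Real.log_div (by linarith) (by linarith)] at h
  have hterm : (fun k : ℕ => x ^ (2 * k + 1) / (2 * k + 1))
      = fun k : ℕ => 1 / 2 * (2 * (1 / (2 * k + 1)) * x ^ (2 * k + 1)) := by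
    funext k
    field_simp
  rw [hterm]
  exact h

theorem sum_range_le_artanh {t : ℝ} (ht₀ : 0 ≤ t) (ht₁ : t < 1) (n : ℕ) :
    ∑ k ∈ Finset.range n, t ^ (2 * k + 1) / (2 * k + 1) ≤ _root_.artanh t :=
  sum_le_hasSum _ (fun _ _ => by positivity) (hasSum_artanh (abs_lt.mpr ⟨by linarith, ht₁⟩))

theorem self_le_artanh {t : ℝ} (ht₀ : 0 ≤ t) (ht₁ : t < 1) : t ≤ _root_.artanh t := by
  simpa using sum_range_le_artanh ht₀ ht₁ 1

theorem artanh_le {t : ℝ} (ht₀ : 0 ≤ t) (ht₁ : t < 1) :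
    _root_.artanh t ≤ t + t ^ 3 / (3 * (1 - t ^ 2)) := by
  have hsq₀ : 0 ≤ t ^ 2 := by positivity
  have hsq₁ : t ^ 2 < 1 := by nlinarith
  have htail := (hasSum_nat_add_iff' 1).mpr (hasSum_artanh (abs_lt.mpr ⟨by linarith, ht₁⟩))
  have hgeom := (hasSum_geometric_of_lt_one hsq₀ hsq₁).mul_left (t ^ 3 / 3)
  have hle : ∀ k : ℕ, t ^ (2 * (k + 1) + 1) / (2 * ↑(k + 1) + 1) ≤ t ^ 3 / 3 * (t ^ 2) ^ k := by
    intro k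
    rw [show t ^ (2 * (k + 1) + 1) = t ^ 3 * (t ^ 2) ^ k by ring, div_mul_eq_mul_div]
    exact div_le_div_of_nonneg_left (by positivity) (by norm_num) (by push_cast; linarith)
  have hsum := hasSum_le hle htail hgeom
  rw [← div_eq_mul_inv, div_div] at hsum
  simp only [Finset.range_one, Finset.sum_singleton] at hsum
  norm_num at hsum
  linarith

theorem artanh_pos_of_pos {t : ℝ} (ht₀ : 0 < t) (ht₁ : t < 1) : 0 < _root_.artanh t :=
  ht₀.trans_le (self_le_artanh ht₀.le ht₁)

theorem one_add_sq_div_three_le_artanh_div {r : ℝ} (hr₀ : 0 < r) (hr₁ : r < 1) :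
    1 + r ^ 2 / 3 ≤ _root_.artanh r / r := by
  have h := sum_range_le_artanh hr₀.le hr₁ 2
  norm_num [Finset.sum_range_succ] at h
  rw [le_div_iff₀ hr₀]
  linarith

theorem artanh_div_le {r : ℝ} (hr₀ : 0 < r) (hr₁ : r < 1) :
    _root_.artanh r / r ≤ 1 + r ^ 2 / (3 * (1 - r ^ 2)) := by
  have hsq : 0 < 1 - r ^ 2 := by nlinarith
  rw [div_le_iff₀ hr₀]
  calc _root_.artanh r ≤ r + r ^ 3 / (3 * (1 - r ^ 2)) := artanh_le hr₀.le hr₁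
    _ = (1 + r ^ 2 / (3 * (1 - r ^ 2))) * r := by field_simp

theorem hasDerivAt_artanh_s5 {t : ℝ} (ht₀ : -1 < t) (ht₁ : t < 1) :
    HasDerivAt _root_.artanh (1 / (1 - t ^ 2)) t := by
  have hnum : HasDerivAt (fun r : ℝ => 1 + r) 1 t := (hasDerivAt_id t).const_add 1
  have hden : HasDerivAt (fun r : ℝ => 1 - r) (-1) t := by
    simpa using (hasDerivAt_id t).const_sub 1
  have h₁ : (1 : ℝ) + t ≠ 0 := by linarith
  have h₂ : (1 : ℝ) - t ≠ 0 := by linarith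
  have h₃ : (1 : ℝ) - t ^ 2 ≠ 0 := by nlinarith
  have hquot := hnum.div hden h₂
  have hlog := hquot.log (div_pos (by linarith) (by linarith)).ne'
  refine (hlog.const_mul (1 / 2)).congr_deriv ?_
  rw [Pi.div_apply]
  field_simp
  ring

/-- As a quadratic in `A`, the expression is positive at `P = t + t³/3 + t⁵/5 ≤ artanh t` (there it
is a polynomial in `t` with positive coefficients) and increasing on `[t, ∞)`, which contains both
`P` and `artanh t`. -/
theorem quadratic_artanh_pos {t : ℝ} (ht₀ : 0 < t) (ht₁ : t < 1) :
    0 < 2 * (1 - t ^ 2) ^ 2 * _root_.artanh t ^ 2 + t * (3 * t ^ 2 - 1) * _root_.artanh t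
      - t ^ 2 := by
  set A := _root_.artanh t
  set P := t + t ^ 3 / 3 + t ^ 5 / 5
  have hPA : P ≤ A := by
    have h := sum_range_le_artanh ht₀.le ht₁ 3
    norm_num [Finset.sum_range_succ] at h
    exact h
  have htP : t ≤ P :=
    show t ≤ t + t ^ 3 / 3 + t ^ 5 / 5 by linarith [pow_pos ht₀ 3, pow_pos ht₀ 5]
  have hQP : 0 < 2 * (1 - t ^ 2) ^ 2 * P ^ 2 + t * (3 * t ^ 2 - 1) * P - t ^ 2 := by
    have hexpand : 2 * (1 - t ^ 2) ^ 2 * P ^ 2 + t * (3 * t ^ 2 - 1) * P - t ^ 2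
        = 52 / 45 * t ^ 6 + 7 / 45 * t ^ 8 + 128 / 225 * t ^ 10 + 8 / 75 * t ^ 12
          + 2 / 25 * t ^ 14 := by ring
    rw [hexpand]
    positivity
  have hslope : 0 ≤ 2 * (1 - t ^ 2) ^ 2 * (A + P) + t * (3 * t ^ 2 - 1) := by
    have hsum : 2 * t ≤ A + P := by linarith
    have hquart : 0 < 4 * t ^ 4 - 5 * t ^ 2 + 3 := by nlinarith [sq_nonneg (2 * t ^ 2 - 5 / 4)]
    nlinarith [mul_le_mul_of_nonneg_left hsum (by positivity : (0 : ℝ) ≤ 2 * (1 - t ^ 2) ^ 2)]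
  have hdiff : 2 * (1 - t ^ 2) ^ 2 * A ^ 2 + t * (3 * t ^ 2 - 1) * A - t ^ 2
      = (2 * (1 - t ^ 2) ^ 2 * P ^ 2 + t * (3 * t ^ 2 - 1) * P - t ^ 2)
        + (A - P) * (2 * (1 - t ^ 2) ^ 2 * (A + P) + t * (3 * t ^ 2 - 1)) := by ring
  rw [hdiff]
  nlinarith [mul_nonneg (sub_nonneg.mpr hPA) hslope]

noncomputable def f₇ (r : ℝ) : ℝ := Real.log (_root_.artanh r / r) / r ^ 2

noncomputable def f₇DerivNum (r : ℝ) : ℝ :=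
  r / ((1 - r ^ 2) * _root_.artanh r) - 1 - 2 * Real.log (_root_.artanh r / r)

theorem hasDerivAt_f₇ {r : ℝ} (hr₀ : 0 < r) (hr₁ : r < 1) :
    HasDerivAt f₇ (f₇DerivNum r / r ^ 3) r := by
  have hA := artanh_pos_of_pos hr₀ hr₁
  have hsq : (1 : ℝ) - r ^ 2 ≠ 0 := by nlinarith
  have hquot := (hasDerivAt_artanh_s5 (by linarith) hr₁).div (hasDerivAt_id r) hr₀.ne'
  have hlog := hquot.log (div_pos hA hr₀).ne'
  refine (hlog.div (hasDerivAt_pow 2 r) (by positivity)).congr_deriv ?_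
  simp only [f₇DerivNum, id, Pi.div_apply]
  field_simp
  ring

theorem hasDerivAt_f₇DerivNum {r : ℝ} (hr₀ : 0 < r) (hr₁ : r < 1) :
    HasDerivAt f₇DerivNum
      ((2 * (1 - r ^ 2) ^ 2 * _root_.artanh r ^ 2 + r * (3 * r ^ 2 - 1) * _root_.artanh r - r ^ 2)
        / (r * ((1 - r ^ 2) * _root_.artanh r) ^ 2)) r := by
  have hA := artanh_pos_of_pos hr₀ hr₁
  have hsq : 0 < 1 - r ^ 2 := by nlinarith
  have hartanh := hasDerivAt_artanh_s5 (by linarith) hr₁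
  have hden := ((hasDerivAt_pow 2 r).const_sub 1).mul hartanh
  have hfrac := (hasDerivAt_id r).div hden (mul_pos hsq hA).ne'
  have hlog := (hartanh.div (hasDerivAt_id r) hr₀.ne').log (div_pos hA hr₀).ne'
  refine ((hfrac.sub_const 1).sub (hlog.const_mul 2)).congr_deriv ?_
  simp only [id, Pi.div_apply, Pi.mul_apply]
  field_simp
  ring

theorem strictMonoOn_f₇DerivNum : StrictMonoOn f₇DerivNum (Ioo 0 1) := by
  refine strictMonoOn_of_deriv_pos (convex_Ioo 0 1)
    (fun r hr => (hasDerivAt_f₇DerivNum hr.1 hr.2).continuousAt.continuousWithinAt) ?_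
  intro r hr
  rw [interior_Ioo] at hr
  have hsq : 0 < 1 - r ^ 2 := by nlinarith [hr.1, hr.2]
  rw [(hasDerivAt_f₇DerivNum hr.1 hr.2).deriv]
  exact div_pos (quadratic_artanh_pos hr.1 hr.2)
    (mul_pos hr.1 (pow_pos (mul_pos hsq (artanh_pos_of_pos hr.1 hr.2)) 2))

theorem tendsto_artanh_div_self : Tendsto (fun r => _root_.artanh r / r) (𝓝[>] 0) (𝓝 1) := by
  have hupper : ContinuousAt (fun r : ℝ => 1 + r ^ 2 / (3 * (1 - r ^ 2))) 0 := by
    fun_prop (disch := norm_num)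
  refine tendsto_of_tendsto_of_tendsto_of_le_of_le' tendsto_const_nhds
    (by simpa using hupper.tendsto.mono_left nhdsWithin_le_nhds) ?_ ?_
  all_goals filter_upwards [Ioo_mem_nhdsGT one_pos] with r hr
  · exact (le_add_of_nonneg_right (by positivity)).trans
      (one_add_sq_div_three_le_artanh_div hr.1 hr.2)
  · exact artanh_div_le hr.1 hr.2

theorem tendsto_f₇DerivNum : Tendsto f₇DerivNum (𝓝[>] 0) (𝓝 0) := by
  have hsq : Tendsto (fun r : ℝ => 1 - r ^ 2) (𝓝[>] 0) (𝓝 1) :=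
    ((by fun_prop : Continuous fun r : ℝ => 1 - r ^ 2).tendsto' 0 1 (by norm_num)).mono_left
      nhdsWithin_le_nhds
  have hlog : Tendsto (fun r => Real.log (_root_.artanh r / r)) (𝓝[>] 0) (𝓝 0) := by
    simpa [Function.comp_def] using
      (Real.continuousAt_log one_ne_zero).tendsto.comp tendsto_artanh_div_self
  have hlim := (((hsq.mul tendsto_artanh_div_self).inv₀ (by norm_num)).sub_const 1).sub
    (hlog.const_mul 2)
  norm_num at hlim
  refine hlim.congr' ?_
  filter_upwards [Ioo_mem_nhdsGT one_pos] with r hr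
  have hA := artanh_pos_of_pos hr.1 hr.2
  simp only [f₇DerivNum]
  field_simp

theorem f₇DerivNum_pos {r : ℝ} (hr₀ : 0 < r) (hr₁ : r < 1) : 0 < f₇DerivNum r := by
  have hhalf : r / 2 ∈ Ioo (0 : ℝ) 1 := ⟨by linarith, by linarith⟩
  have hnonneg : 0 ≤ f₇DerivNum (r / 2) := by
    refine le_of_tendsto tendsto_f₇DerivNum ?_
    filter_upwards [Ioo_mem_nhdsGT hhalf.1] with s hs
    exact (strictMonoOn_f₇DerivNum ⟨hs.1, hs.2.trans hhalf.2⟩ hhalf hs.2).le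
  exact hnonneg.trans_lt (strictMonoOn_f₇DerivNum hhalf ⟨hr₀, hr₁⟩ (by linarith))

theorem strictMonoOn_f₇ : StrictMonoOn f₇ (Ioo 0 1) := by
  refine strictMonoOn_of_deriv_pos (convex_Ioo 0 1)
    (fun r hr => (hasDerivAt_f₇ hr.1 hr.2).continuousAt.continuousWithinAt) ?_
  intro r hr
  rw [interior_Ioo] at hr
  rw [(hasDerivAt_f₇ hr.1 hr.2).deriv]
  exact div_pos (f₇DerivNum_pos hr.1 hr.2) (pow_pos hr.1 3)

theorem one_div_three_add_sq_le_f₇ {r : ℝ} (hr₀ : 0 < r) (hr₁ : r < 1) :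
    1 / (3 + r ^ 2) ≤ f₇ r := by
  have hu := one_add_sq_div_three_le_artanh_div hr₀ hr₁
  have hlog : r ^ 2 / (3 + r ^ 2) ≤ Real.log (_root_.artanh r / r) := by
    calc r ^ 2 / (3 + r ^ 2) = 1 - (1 + r ^ 2 / 3)⁻¹ := by field_simp; ring
      _ ≤ 1 - (_root_.artanh r / r)⁻¹ := by gcongr
      _ ≤ Real.log (_root_.artanh r / r) := Real.one_sub_inv_le_log_of_pos
          (div_pos (artanh_pos_of_pos hr₀ hr₁) hr₀)
  calc 1 / (3 + r ^ 2) = r ^ 2 / (3 + r ^ 2) / r ^ 2 := by field_simp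
    _ ≤ f₇ r := by unfold f₇; gcongr

theorem f₇_le {r : ℝ} (hr₀ : 0 < r) (hr₁ : r < 1) : f₇ r ≤ 1 / (3 * (1 - r ^ 2)) := by
  have hsq : 0 < 1 - r ^ 2 := by nlinarith
  have hlog : Real.log (_root_.artanh r / r) ≤ r ^ 2 / (3 * (1 - r ^ 2)) := by
    have := Real.log_le_sub_one_of_pos (div_pos (artanh_pos_of_pos hr₀ hr₁) hr₀)
    linarith [artanh_div_le hr₀ hr₁]
  calc f₇ r ≤ r ^ 2 / (3 * (1 - r ^ 2)) / r ^ 2 := by unfold f₇; gcongr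
    _ = 1 / (3 * (1 - r ^ 2)) := by field_simp

theorem tendsto_f₇_nhdsGT_zero : Tendsto f₇ (𝓝[>] 0) (𝓝 (1 / 3)) := by
  have hlower : Tendsto (fun r : ℝ => 1 / (3 + r ^ 2)) (𝓝[>] 0) (𝓝 (1 / 3)) := by
    have hcont : ContinuousAt (fun r : ℝ => 1 / (3 + r ^ 2)) 0 := by
      fun_prop (disch := positivity)
    simpa using hcont.tendsto.mono_left nhdsWithin_le_nhds
  have hupper : Tendsto (fun r : ℝ => 1 / (3 * (1 - r ^ 2))) (𝓝[>] 0) (𝓝 (1 / 3)) := by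
    have hcont : ContinuousAt (fun r : ℝ => 1 / (3 * (1 - r ^ 2))) 0 := by
      fun_prop (disch := norm_num)
    simpa using hcont.tendsto.mono_left nhdsWithin_le_nhds
  refine tendsto_of_tendsto_of_tendsto_of_le_of_le' hlower hupper ?_ ?_
  all_goals filter_upwards [Ioo_mem_nhdsGT one_pos] with r hr
  · exact one_div_three_add_sq_le_f₇ hr.1 hr.2
  · exact f₇_le hr.1 hr.2

theorem tendsto_artanh_nhdsLT_one : Tendsto _root_.artanh (𝓝[<] 1) atTop := by
  have hsub : Tendsto (fun r : ℝ => 1 - r) (𝓝[<] 1) (𝓝[>] 0) := by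
    refine tendsto_nhdsWithin_of_tendsto_nhds_of_eventually_within _ ?_ ?_
    · exact ((by fun_prop : Continuous fun r : ℝ => 1 - r).tendsto' 1 0 (by norm_num)).mono_left
        nhdsWithin_le_nhds
    · filter_upwards [self_mem_nhdsWithin] with r (hr : r < 1)
      exact sub_pos.mpr hr
  have hquot : Tendsto (fun r : ℝ => (1 + r) / (1 - r)) (𝓝[<] 1) atTop := by
    refine tendsto_atTop_mono' _ ?_ hsub.inv_tendsto_nhdsGT_zero
    filter_upwards [Ioo_mem_nhdsLT one_pos] with r hr
    rw [Pi.inv_apply, inv_eq_one_div]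
    exact div_le_div_of_nonneg_right (by linarith [hr.1]) (by linarith [hr.2])
  exact (Real.tendsto_log_atTop.comp hquot).const_mul_atTop one_half_pos

theorem log_artanh_le_f₇ {r : ℝ} (hr₀ : 0 < r) (hr₁ : r < 1) :
    Real.log (_root_.artanh r) ≤ f₇ r := by
  have hA := artanh_pos_of_pos hr₀ hr₁
  have hlog_nonneg : 0 ≤ Real.log (_root_.artanh r / r) :=
    Real.log_nonneg ((one_le_div hr₀).mpr (self_le_artanh hr₀.le hr₁))
  calc Real.log (_root_.artanh r)
      ≤ Real.log (_root_.artanh r) - Real.log r := by linarith [Real.log_nonpos hr₀.le hr₁.le]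
    _ = Real.log (_root_.artanh r / r) := (Real.log_div hA.ne' hr₀.ne').symm
    _ ≤ Real.log (_root_.artanh r / r) / r ^ 2 :=
        le_div_self hlog_nonneg (by positivity) (by nlinarith)

theorem tendsto_f₇_nhdsLT_one : Tendsto f₇ (𝓝[<] 1) atTop := by
  refine tendsto_atTop_mono' _ ?_ (Real.tendsto_log_atTop.comp tendsto_artanh_nhdsLT_one)
  filter_upwards [Ioo_mem_nhdsLT one_pos] with r hr
  exact log_artanh_le_f₇ hr.1 hr.2

theorem stmt5 :
    StrictMonoOn (fun r : ℝ => Real.log (_root_.artanh r / r) / r^2) (Ioo 0 1) ∧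
    Tendsto (fun r : ℝ => Real.log (_root_.artanh r / r) / r^2) (𝓝[>] 0) (𝓝 (1/3)) ∧
    Tendsto (fun r : ℝ => Real.log (_root_.artanh r / r) / r^2) (𝓝[<] 1) atTop :=
  ⟨strictMonoOn_f₇, tendsto_f₇_nhdsGT_zero, tendsto_f₇_nhdsLT_one⟩
end
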